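/- arXiv:2007.08643 — 7 statements merged into one kernel-verified Lean document; each statement's English description precedes it below -/
import Mathlib

section
/- There exists an absolute constant c > 0 such that for every finite set S of closed intervals on the real line, every integer k ≥ 1, and every k-maximal independent set I ⊆ S, one has |I| ≥ (1 − c/k) · α(S). -/
/-!
Compare `I` with a maximum independent set `J`. A set of at most `k + 1` intervals of `J \ I`
meets at least as many intervals of `I`: otherwise exchanging its neighbours for it would be an
improving swap forbidden by `k`-maximality. Cut `J \ I` from left to right into blocks of `k + 1`
intervals; a block and everything to its right share at most one neighbour in `I` (the one
straddling the gap), so `k · |J \ I| ≤ (k + 1) · |I \ J|`. Hence `k · α(S) ≤ (k + 1) · |I|`,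
which gives the claim with `c = 1`.
-/

open Finset

/-- A nonempty closed interval `[l, r]` on the real line. -/
structure Ivl where
  l : ℝ
  r : ℝ
  hle : l ≤ r

noncomputable instance : DecidableEq Ivl := Classical.decEq _

/-- Two closed intervals intersect (have a common point). -/
def Ivl.meets (x y : Ivl) : Prop := x.l ≤ y.r ∧ y.l ≤ x.r

/-- The interval `y` is strictly contained in the interval `x`. -/
def Ivl.strictIn (y x : Ivl) : Prop := x.l < y.l ∧ y.r < x.r

/-- `I` is an independent set (a pairwise disjoint subset) of the interval set `S`. -/
def IsIndep (S I : Finset Ivl) : Prop :=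
  I ⊆ S ∧ ∀ x ∈ I, ∀ y ∈ I, x ≠ y → ¬ Ivl.meets x y

/-- `α(S)`: the maximum cardinality of an independent set of `S`. -/
noncomputable def alphaIvl (S : Finset Ivl) : ℕ :=
  sSup {n : ℕ | ∃ I : Finset Ivl, IsIndep S I ∧ I.card = n}

/-- `I` is a `k`-maximal independent set of `S`. -/
def IsKMaximal (S : Finset Ivl) (k : ℕ) (I : Finset Ivl) : Prop :=
  IsIndep S I ∧
  ∀ t, t ≤ k → ∀ A, A ⊆ I → ∀ B, B ⊆ S \ I →
    A.card = t → B.card = t + 1 → ¬ IsIndep S ((I \ A) ∪ B)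

/-- `I` is a `k`-valid independent set of `S`: it is `k`-maximal and no interval of
`S \ I` is strictly contained in an interval of `I` (no-containment property). -/
def IsKValid (S : Finset Ivl) (k : ℕ) (I : Finset Ivl) : Prop :=
  IsKMaximal S k I ∧ ∀ y ∈ S \ I, ∀ x ∈ I, ¬ Ivl.strictIn y x

/-- `(A, B)` induces an alternating path with respect to `I`, witnessed by the
left-to-right orderings `a` of `A` and `b` of `B`: `(I \ A) ∪ B` is independent
and in the intersection graph of `I ∪ B` the set `A ∪ B` induces exactly the path
`b 0, a 0, b 1, a 1, …, a (t-1), b t` (consecutive intervals of this sequence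
intersect, all other pairs among `A ∪ B` are disjoint, and no interval of `I \ A`
intersects an interval of `B`). -/
def IsAltPathWith (S I A B : Finset Ivl) (t : ℕ)
    (a : Fin t → Ivl) (b : Fin (t + 1) → Ivl) : Prop :=
  A ⊆ I ∧ B ⊆ S \ I ∧ A.card = t ∧ B.card = t + 1 ∧
  IsIndep S ((I \ A) ∪ B) ∧
  (∀ i, a i ∈ A) ∧ (∀ i, b i ∈ B) ∧
  Function.Injective a ∧ Function.Injective b ∧
  (∀ i j : Fin t, i < j → (a i).r < (a j).l) ∧
  (∀ i j : Fin (t + 1), i < j → (b i).r < (b j).l) ∧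
  (∀ (i : Fin t) (j : Fin (t + 1)),
    Ivl.meets (a i) (b j) ↔ (j = i.castSucc ∨ j = i.succ)) ∧
  (∀ x ∈ I, x ∉ A → ∀ j : Fin (t + 1), ¬ Ivl.meets x (b j))

/-- `(A, B)` induces an alternating path with respect to `I`. -/
def IsAltPath (S I A B : Finset Ivl) : Prop :=
  ∃ t a b, IsAltPathWith S I A B t a b

/-- The alternating path `(A, B)` is smallest: no alternating path `(A', B')`
with `A' ⊊ A`. -/
def IsSmallestAltPath (S I A B : Finset Ivl) : Prop :=
  IsAltPath S I A B ∧ ¬ ∃ A' B' : Finset Ivl, A' ⊂ A ∧ IsAltPath S I A' B'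

/-- The leftmost right endpoint property for the alternating path with orderings
`a`, `b`: each `b (j+1)` has the leftmost right endpoint among all intervals of `S`
whose left endpoint lies in `[r (b j), r (a j)]`, and `b 0` has the leftmost right
endpoint among all intervals of `S` whose left endpoint lies in `[r a', r (a 0))`,
where `a'` is the interval of `I` immediately to the left of `a 0` (the range is
`(-∞, r (a 0))` if no such interval exists). -/
def LREP (S I : Finset Ivl) (t : ℕ) (a : Fin t → Ivl) (b : Fin (t + 1) → Ivl) : Prop :=
  (∀ j : Fin t,
    ((b j.castSucc).r ≤ (b j.succ).l ∧ (b j.succ).l ≤ (a j).r) ∧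
    ∀ y ∈ S, (b j.castSucc).r ≤ y.l → y.l ≤ (a j).r → (b j.succ).r ≤ y.r) ∧
  (∀ h : 0 < t,
    ((∀ x ∈ I, x.r < (a ⟨0, h⟩).l → x.r ≤ (b 0).l) ∧ (b 0).l < (a ⟨0, h⟩).r) ∧
    ∀ y ∈ S, (∀ x ∈ I, x.r < (a ⟨0, h⟩).l → x.r ≤ y.l) → y.l < (a ⟨0, h⟩).r →
      (b 0).r ≤ y.r)

/-- The rightmost left endpoint property: the mirror image (exchanging the roles of
left and right) of the leftmost right endpoint property `LREP`. -/
def RLEP (S I : Finset Ivl) (t : ℕ) (a : Fin t → Ivl) (b : Fin (t + 1) → Ivl) : Prop :=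
  (∀ j : Fin t,
    ((a j).l ≤ (b j.castSucc).r ∧ (b j.castSucc).r ≤ (b j.succ).l) ∧
    ∀ y ∈ S, (a j).l ≤ y.r → y.r ≤ (b j.succ).l → y.l ≤ (b j.castSucc).l) ∧
  (∀ h : 0 < t,
    ((a ⟨t - 1, Nat.sub_lt h Nat.one_pos⟩).l < (b (Fin.last t)).r ∧
      (∀ x ∈ I, (a ⟨t - 1, Nat.sub_lt h Nat.one_pos⟩).r < x.l →
        (b (Fin.last t)).r ≤ x.l)) ∧
    ∀ y ∈ S, (a ⟨t - 1, Nat.sub_lt h Nat.one_pos⟩).l < y.r →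
      (∀ x ∈ I, (a ⟨t - 1, Nat.sub_lt h Nat.one_pos⟩).r < x.l → y.r ≤ x.l) →
      y.l ≤ (b (Fin.last t)).l)

/-- A proper alternating path: a smallest alternating path satisfying the leftmost
right endpoint property. -/
def IsProperAltPath (S I A B : Finset Ivl) : Prop :=
  IsSmallestAltPath S I A B ∧
  ∀ t a b, IsAltPathWith S I A B t a b → LREP S I t a b

/-- `B` is a left substitute of `A` (with respect to the `k`-valid independent set
`I` of `S`): `|B| = |A|`, the pair `(A, B)` cannot be extended to an alternating
path of sizes `t`, `t + 1` for any `t ≤ 2k`, and, writing `aj` for the rightmost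
interval of `A`, if `aj` were not there then `(A \ {aj}, B)` would be a proper
alternating path. -/
def IsLeftSubstitute (S : Finset Ivl) (k : ℕ) (I A B : Finset Ivl) : Prop :=
  A ⊆ I ∧ B ⊆ S \ I ∧ B.card = A.card ∧
  (∀ t, t ≤ 2 * k → ¬ ∃ A'' B'' : Finset Ivl, A ⊆ A'' ∧ B ⊆ B'' ∧
    A''.card = t ∧ B''.card = t + 1 ∧ IsAltPath S I A'' B'') ∧
  ∃ aj ∈ A, (∀ x ∈ A, x ≠ aj → x.r < aj.l) ∧
    IsProperAltPath (S.erase aj) (I.erase aj) (A.erase aj) B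

/-- `B` is a right substitute of `A`: defined symmetrically to `IsLeftSubstitute`,
with the leftmost interval `a1` of `A` in place of the rightmost one. -/
def IsRightSubstitute (S : Finset Ivl) (k : ℕ) (I A B : Finset Ivl) : Prop :=
  A ⊆ I ∧ B ⊆ S \ I ∧ B.card = A.card ∧
  (∀ t, t ≤ 2 * k → ¬ ∃ A'' B'' : Finset Ivl, A ⊆ A'' ∧ B ⊆ B'' ∧
    A''.card = t ∧ B''.card = t + 1 ∧ IsAltPath S I A'' B'') ∧
  ∃ a1 ∈ A, (∀ x ∈ A, x ≠ a1 → a1.r < x.l) ∧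
    IsProperAltPath (S.erase a1) (I.erase a1) (A.erase a1) B


namespace Ivl

lemma meets_comm {x y : Ivl} : x.meets y ↔ y.meets x := and_comm

lemma lt_or_lt_of_not_meets {x y : Ivl} (h : ¬ x.meets y) : x.r < y.l ∨ y.r < x.l := by
  by_contra! h'
  exact h ⟨h'.2, h'.1⟩

end Ivl

lemma IsIndep.pairwise {S I : Finset Ivl} (h : IsIndep S I) :
    (I : Set Ivl).Pairwise fun x y => ¬ x.meets y :=
  h.2

open Classical in
noncomputable def nbhd (I B : Finset Ivl) : Finset Ivl :=
  I.filter fun x => ∃ y ∈ B, x.meets y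

section Nbhd

variable {I B C : Finset Ivl}

lemma mem_nbhd {x : Ivl} : x ∈ nbhd I B ↔ x ∈ I ∧ ∃ y ∈ B, x.meets y := by
  simp only [nbhd, mem_filter]

lemma nbhd_subset : nbhd I B ⊆ I := fun _ hx => (mem_nbhd.1 hx).1

lemma nbhd_mono (h : B ⊆ C) : nbhd I B ⊆ nbhd I C := fun x hx => by
  obtain ⟨hxI, y, hy, hxy⟩ := mem_nbhd.1 hx
  exact mem_nbhd.2 ⟨hxI, y, h hy, hxy⟩

lemma nbhd_union : nbhd I (B ∪ C) = nbhd I B ∪ nbhd I C := by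
  ext x
  simp only [mem_union, mem_nbhd, or_and_right, exists_or, and_or_left]

lemma card_nbhd_inter_le_one (hI : (I : Set Ivl).Pairwise fun x y => ¬ x.meets y)
    (hBC : ∀ y ∈ B, ∀ z ∈ C, y.r < z.l) : (nbhd I B ∩ nbhd I C).card ≤ 1 := by
  have not_left : ∀ a ∈ nbhd I B ∩ nbhd I C, ∀ b ∈ nbhd I B ∩ nbhd I C, ¬ a.r < b.l := by
    intro a ha b hb hab
    obtain ⟨-, z, hz, haz⟩ := mem_nbhd.1 (mem_inter.1 ha).2
    obtain ⟨-, y, hy, hby⟩ := mem_nbhd.1 (mem_inter.1 hb).1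
    linarith [hBC y hy z hz, haz.2, hby.1]
  rw [card_le_one]
  intro a ha b hb
  by_contra hab
  rcases Ivl.lt_or_lt_of_not_meets
      (hI (nbhd_subset (mem_inter.1 ha).1) (nbhd_subset (mem_inter.1 hb).1) hab) with h | h
  · exact not_left a ha b hb h
  · exact not_left b hb a ha h

end Nbhd

lemma exists_leftmost_subset_card_eq {s : Finset Ivl}
    (hs : (s : Set Ivl).Pairwise fun x y => ¬ x.meets y) {m : ℕ} (hm : m ≤ s.card) :
    ∃ B ⊆ s, B.card = m ∧ ∀ y ∈ B, ∀ z ∈ s \ B, y.r < z.l := by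
  induction m with
  | zero => exact ⟨∅, empty_subset _, rfl, by simp⟩
  | succ m ih =>
    obtain ⟨B, hBs, hBm, hB⟩ := ih (by omega)
    have hne : (s \ B).Nonempty := by
      rw [← card_pos, card_sdiff_of_subset hBs]
      omega
    obtain ⟨z₀, hz₀, hmin⟩ := (s \ B).exists_min_image Ivl.r hne
    obtain ⟨hz₀s, hz₀B⟩ := mem_sdiff.1 hz₀
    refine ⟨insert z₀ B, insert_subset hz₀s hBs, by rw [card_insert_of_notMem hz₀B, hBm], ?_⟩
    intro y hy z hz
    rw [mem_sdiff, mem_insert, not_or] at hz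
    obtain ⟨hzs, hzz₀, hzB⟩ := hz
    rcases mem_insert.1 hy with rfl | hyB
    · rcases Ivl.lt_or_lt_of_not_meets (hs hz₀s hzs (Ne.symm hzz₀)) with h | h
      · exact h
      · linarith [hmin z (mem_sdiff.2 ⟨hzs, hzB⟩), y.hle]
    · exact hB y hyB z (mem_sdiff.2 ⟨hzs, hzB⟩)

lemma isIndep_sdiff_union {S I A B : Finset Ivl} (hI : IsIndep S I) (hA : nbhd I B ⊆ A)
    (hBS : B ⊆ S) (hB : (B : Set Ivl).Pairwise fun x y => ¬ x.meets y) :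
    IsIndep S ((I \ A) ∪ B) := by
  refine ⟨union_subset (sdiff_subset.trans hI.1) hBS, ?_⟩
  have hIB : ∀ x ∈ I \ A, ∀ y ∈ B, ¬ x.meets y := fun x hx y hy hxy =>
    (mem_sdiff.1 hx).2 (hA (mem_nbhd.2 ⟨(mem_sdiff.1 hx).1, y, hy, hxy⟩))
  intro x hx y hy hxy
  rcases mem_union.1 hx with hx | hx <;> rcases mem_union.1 hy with hy | hy
  · exact hI.2 x (mem_sdiff.1 hx).1 y (mem_sdiff.1 hy).1 hxy
  · exact hIB x hx y hy
  · exact fun h => hIB y hy x hx (Ivl.meets_comm.1 h)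
  · exact hB hx hy hxy

/-- Hall's condition for sets of at most `k + 1` intervals. -/
lemma IsKMaximal.card_le_card_nbhd {S I B : Finset Ivl} {k : ℕ} (hI : IsKMaximal S k I)
    (hBS : B ⊆ S \ I) (hB : (B : Set Ivl).Pairwise fun x y => ¬ x.meets y)
    (hBk : B.card ≤ k + 1) : B.card ≤ (nbhd I B).card := by
  by_contra! hlt
  obtain ⟨B', hB'B, hB'card⟩ := exists_subset_card_eq (n := (nbhd I B).card + 1) hlt
  exact hI.2 _ (by omega) _ nbhd_subset B' (hB'B.trans hBS) rfl hB'card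
    (isIndep_sdiff_union hI.1 (nbhd_mono hB'B) (hB'B.trans (hBS.trans sdiff_subset))
      (hB.mono (coe_subset.2 hB'B)))

theorem mul_card_le_mul_card_nbhd {I J : Finset Ivl} {k : ℕ}
    (hI : (I : Set Ivl).Pairwise fun x y => ¬ x.meets y)
    (hJ : (J : Set Ivl).Pairwise fun x y => ¬ x.meets y)
    (hHall : ∀ B ⊆ J, B.card ≤ k + 1 → B.card ≤ (nbhd I B).card) :
    k * J.card ≤ (k + 1) * (nbhd I J).card := by
  induction J using Finset.strongInduction with
  | H J ih =>
  by_cases hsmall : J.card ≤ k + 1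
  · have := hHall J Subset.rfl hsmall
    nlinarith
  obtain ⟨B, hBJ, hBcard, hBleft⟩ := exists_leftmost_subset_card_eq hJ (m := k + 1) (by omega)
  have hBne : B.Nonempty := by rw [← card_pos]; omega
  have hblock := hHall B hBJ hBcard.le
  have hrest := ih (J \ B) (sdiff_ssubset hBJ hBne) (hJ.mono (coe_subset.2 sdiff_subset))
    fun B' hB' => hHall B' (hB'.trans sdiff_subset)
  have hshared := card_nbhd_inter_le_one hI hBleft
  have hunion := card_union_add_card_inter (nbhd I B) (nbhd I (J \ B))
  rw [← nbhd_union, union_sdiff_of_subset hBJ] at hunion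
  have hJcard := card_sdiff_add_card_eq_card hBJ
  nlinarith

theorem exists_isIndep_card_eq_alphaIvl (S : Finset Ivl) :
    ∃ J : Finset Ivl, IsIndep S J ∧ J.card = alphaIvl S :=
  Nat.sSup_mem (s := {n | ∃ J, IsIndep S J ∧ J.card = n}) ⟨0, ∅, ⟨empty_subset _, by simp⟩, rfl⟩
    ⟨S.card, fun _ ⟨_, hJ, hn⟩ => hn ▸ card_le_card hJ.1⟩

theorem IsKMaximal.mul_alphaIvl_le {S I : Finset Ivl} {k : ℕ} (hI : IsKMaximal S k I) :
    k * alphaIvl S ≤ (k + 1) * I.card := by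
  obtain ⟨J, hJ, hJcard⟩ := exists_isIndep_card_eq_alphaIvl S
  have hJI : J \ I ⊆ S \ I := sdiff_subset_sdiff hJ.1 le_rfl
  have hpair := hJ.pairwise.mono (coe_subset.2 (sdiff_subset (s := J) (t := I)))
  have hcount := mul_card_le_mul_card_nbhd hI.1.pairwise hpair fun B hB hBk =>
    hI.card_le_card_nbhd (hB.trans hJI) (hpair.mono (coe_subset.2 hB)) hBk
  have hnbhd : nbhd I (J \ I) ⊆ I \ J := fun x hx => by
    obtain ⟨hxI, y, hy, hxy⟩ := mem_nbhd.1 hx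
    obtain ⟨hyJ, hyI⟩ := mem_sdiff.1 hy
    exact mem_sdiff.2 ⟨hxI, fun hxJ => hJ.2 x hxJ y hyJ (by rintro rfl; exact hyI hxI) hxy⟩
  have hIJ := card_le_card hnbhd
  have hJsplit := card_sdiff_add_card_inter J I
  have hIsplit := card_sdiff_add_card_inter I J
  rw [inter_comm] at hIsplit
  rw [← hJcard]
  nlinarith

/-- There exists an absolute constant `c > 0` such that for every finite set `S` of
intervals, every integer `k ≥ 1`, and every `k`-maximal independent set `I ⊆ S`,
one has `|I| ≥ (1 - c / k) · α(S)`. -/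
theorem stmt0 :
    ∃ c : ℝ, 0 < c ∧
      ∀ (S : Finset Ivl) (k : ℕ) (I : Finset Ivl), 1 ≤ k → IsKMaximal S k I →
        ((1 : ℝ) - c / (k : ℝ)) * (alphaIvl S : ℝ) ≤ (I.card : ℝ) := by
  refine ⟨1, one_pos, fun S k I hk hI => ?_⟩
  have hk1 : (1 : ℝ) ≤ k := by exact_mod_cast hk
  have hk0 : (0 : ℝ) < k := by linarith
  have h : (k : ℝ) * alphaIvl S ≤ (k + 1) * I.card := by exact_mod_cast hI.mul_alphaIvl_le
  rw [one_sub_div hk0.ne', div_mul_eq_mul_div, div_le_iff₀ hk0]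
  nlinarith [mul_le_mul_of_nonneg_left h (by linarith : (0 : ℝ) ≤ k - 1)]
end

section
/- Let S be a finite set of intervals and I ⊆ S an independent set. If (A, B) induces an alternating path with respect to I, then no interval of A is strictly contained in an interval of B. -/
open Finset

/- In an alternating path every interval `a i` of `A` meets the two consecutive, hence disjoint,
intervals `b i` and `b (i+1)` of `B`. An interval strictly inside one of them would stay inside it,
so it could not reach the other. -/

theorem Finset.exists_apply_eq_of_injective_of_card_eq {α : Type*} {s : Finset α} {n : ℕ}
    (f : Fin n → α) (hf : ∀ i, f i ∈ s) (hinj : Function.Injective f) (hcard : s.card = n) :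
    ∀ x ∈ s, ∃ i, f i = x := by
  intro x hx
  obtain ⟨i, -, hi⟩ := Finset.surjOn_of_injOn_of_card_le (s := Finset.univ) f
    (fun i _ => hf i) hinj.injOn (by simp [hcard]) hx
  exact ⟨i, hi⟩

namespace Ivl

theorem meets_of_strictIn {x y : Ivl} (h : x.strictIn y) : x.meets y :=
  ⟨x.hle.trans h.2.le, h.1.le.trans x.hle⟩

theorem not_strictIn_of_meets_of_meets {x u v : Ivl} (hu : x.meets u) (hv : x.meets v)
    (huv : u.r < v.l) : ¬ x.strictIn u ∧ ¬ x.strictIn v :=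
  ⟨fun h => by linarith [h.2, hv.2], fun h => by linarith [h.1, hu.1]⟩

end Ivl

theorem IsAltPathWith.not_strictIn {S I A B : Finset Ivl} {t : ℕ} {a : Fin t → Ivl}
    {b : Fin (t + 1) → Ivl} (h : IsAltPathWith S I A B t a b) (i : Fin t) (j : Fin (t + 1)) :
    ¬ (a i).strictIn (b j) := by
  obtain ⟨-, -, -, -, -, -, -, -, -, -, hbord, hmeets, -⟩ := h
  have hneighbours := Ivl.not_strictIn_of_meets_of_meets
    ((hmeets i i.castSucc).mpr (Or.inl rfl)) ((hmeets i i.succ).mpr (Or.inr rfl))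
    (hbord _ _ Fin.castSucc_lt_succ)
  intro hij
  rcases (hmeets i j).mp (Ivl.meets_of_strictIn hij) with rfl | rfl
  · exact hneighbours.1 hij
  · exact hneighbours.2 hij

theorem stmt2_general (S I A B : Finset Ivl)
    (h : IsAltPath S I A B) :
    ∀ x ∈ A, ∀ y ∈ B, ¬ Ivl.strictIn x y := by
  obtain ⟨t, a, b, hpath⟩ := h
  have ⟨_, _, hcA, hcB, _, haA, hbB, hainj, hbinj, _⟩ := hpath
  intro x hx y hy
  obtain ⟨i, rfl⟩ := Finset.exists_apply_eq_of_injective_of_card_eq a haA hainj hcA x hx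
  obtain ⟨j, rfl⟩ := Finset.exists_apply_eq_of_injective_of_card_eq b hbB hbinj hcB y hy
  exact hpath.not_strictIn i j

/-- If `(A, B)` induces an alternating path with respect to the independent set `I`,
then no interval of `A` is strictly contained in an interval of `B`. -/
theorem stmt2 (S I A B : Finset Ivl) (hI : IsIndep S I)
    (h : IsAltPath S I A B) :
    ∀ x ∈ A, ∀ y ∈ B, ¬ Ivl.strictIn x y :=
  stmt2_general S I A B h
end

section
/- Let S be a finite set of intervals, k ≥ 0 an integer, and I a k-valid independent set of S. Let x ∉ S be an interval that is disjoint from every interval of I (so that I ∪ {x} is an independent set of S ∪ {x}). Then I ∪ {x} is a k-valid independent set of S ∪ {x}. -/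
open Finset

lemma indep_subset {S S' J J' : Finset Ivl} (h : IsIndep S' J) (h1 : J' ⊆ J)
    (h2 : J' ⊆ S) : IsIndep S J' :=
  ⟨h2, fun a ha b hb hne => h.2 a (h1 ha) b (h1 hb) hne⟩

/-- If `I` is a `k`-valid independent set of `S` and `x ∉ S` is an interval disjoint
from every interval of `I`, then `I ∪ {x}` is a `k`-valid independent set of
`S ∪ {x}`. -/
theorem stmt7 (S : Finset Ivl) (k : ℕ) (I : Finset Ivl) (hI : IsKValid S k I)
    (x : Ivl) (hx : x ∉ S) (hdisj : ∀ y ∈ I, ¬ Ivl.meets x y) :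
    IsKValid (insert x S) k (insert x I) := by
  obtain ⟨⟨⟨hIS, hIpair⟩, hmax⟩, hnc⟩ := hI
  have hxI : x ∉ I := fun h => hx (hIS h)
  -- membership facts about B
  have hBsub : ∀ B : Finset Ivl, B ⊆ insert x S \ insert x I → B ⊆ S \ I := by
    intro B hB b hb
    have := hB hb
    rw [mem_sdiff] at this ⊢
    obtain ⟨h1, h2⟩ := this
    have hbx : b ≠ x := fun h => h2 (by simp [h])
    rcases mem_insert.mp h1 with h | h
    · exact absurd h hbx
    · exact ⟨h, fun hbI => h2 (mem_insert_of_mem hbI)⟩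
  constructor
  · constructor
    · -- independence of insert x I
      constructor
      · exact insert_subset_insert x hIS
      · intro a ha b hb hne
        rcases mem_insert.mp ha with hax | ha
        · rcases mem_insert.mp hb with hbx | hb
          · exact absurd (hax.trans hbx.symm) hne
          · exact hax ▸ hdisj b hb
        · rcases mem_insert.mp hb with hbx | hb
          · intro hm
            exact hdisj a ha ⟨hbx ▸ hm.2, hbx ▸ hm.1⟩
          · exact hIpair a ha b hb hne
    · -- k-maximality
      intro t ht A hA B hB hAcard hBcard hind
      have hBS : B ⊆ S \ I := hBsub B hB
      have hxB : x ∉ B := fun h => hx ((mem_sdiff.mp (hBS h)).1)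
      by_cases hxA : x ∈ A
      · -- case x ∈ A
        set A' := A.erase x with hA'
        have hA'I : A' ⊆ I := by
          intro a ha
          rw [mem_erase] at ha
          rcases mem_insert.mp (hA ha.2) with h | h
          · exact absurd h ha.1
          · exact h
        have ht1 : 1 ≤ t := by
          rw [← hAcard]; exact card_pos.mpr ⟨x, hxA⟩
        have hA'card : A'.card = t - 1 := by
          rw [hA', card_erase_of_mem hxA, hAcard]
        obtain ⟨b0, hb0⟩ : B.Nonempty := card_pos.mp (by omega)
        set B' := B.erase b0 with hB'
        have hB'card : B'.card = (t - 1) + 1 := by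
          rw [hB', card_erase_of_mem hb0, hBcard]; omega
        refine hmax (t - 1) (by omega) A' hA'I B'
          (fun b hb => hBS (mem_of_mem_erase hb)) hA'card hB'card ?_
        have hsub : (I \ A') ∪ B' ⊆ (insert x I \ A) ∪ B := by
          intro z hz
          rcases mem_union.mp hz with hz | hz
          · rw [mem_sdiff] at hz
            refine mem_union_left _ (mem_sdiff.mpr ⟨mem_insert_of_mem hz.1, ?_⟩)
            intro hzA
            have hzx : z ≠ x := fun h => hxI (h ▸ hz.1)
            exact hz.2 (mem_erase.mpr ⟨hzx, hzA⟩)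
          · exact mem_union_right _ (mem_of_mem_erase hz)
        refine indep_subset hind hsub ?_
        intro z hz
        rcases mem_union.mp hz with hz | hz
        · exact hIS (mem_sdiff.mp hz).1
        · exact (mem_sdiff.mp (hBS (mem_of_mem_erase hz))).1
      · -- case x ∉ A
        have hAI : A ⊆ I := by
          intro a ha
          rcases mem_insert.mp (hA ha) with h | h
          · exact absurd (h ▸ ha) hxA
          · exact h
        refine hmax t ht A hAI B hBS hAcard hBcard ?_
        have hsub : (I \ A) ∪ B ⊆ (insert x I \ A) ∪ B := by
          intro z hz
          rcases mem_union.mp hz with hz | hz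
          · rw [mem_sdiff] at hz
            exact mem_union_left _ (mem_sdiff.mpr ⟨mem_insert_of_mem hz.1, hz.2⟩)
          · exact mem_union_right _ hz
        refine indep_subset hind hsub ?_
        intro z hz
        rcases mem_union.mp hz with hz | hz
        · exact hIS (mem_sdiff.mp hz).1
        · exact (mem_sdiff.mp (hBS hz)).1
  · -- no containment
    intro y hy z hz hstrict
    have hyS : y ∈ S \ I := by
      rw [mem_sdiff] at hy ⊢
      obtain ⟨h1, h2⟩ := hy
      have hyx : y ≠ x := fun h => h2 (by simp [h])
      rcases mem_insert.mp h1 with h | h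
      · exact absurd h hyx
      · exact ⟨h, fun hyI => h2 (mem_insert_of_mem hyI)⟩
    rcases mem_insert.mp hz with rfl | hz
    · -- z = x : derive contradiction using 0-maximality
      have hyI : y ∉ I := (mem_sdiff.mp hyS).2
      have h0 : ¬ IsIndep S ((I \ (∅ : Finset Ivl)) ∪ {y}) := by
        refine hmax 0 (Nat.zero_le k) ∅ (empty_subset _) {y}
          (singleton_subset_iff.mpr hyS) rfl rfl
      rw [sdiff_empty] at h0
      apply h0
      constructor
      · intro w hw
        rcases mem_union.mp hw with hw | hw
        · exact hIS hw
        · rw [mem_singleton] at hw; exact hw ▸ (mem_sdiff.mp hyS).1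
      · intro a ha b hb hne hm
        rcases mem_union.mp ha with ha | ha <;>
          rcases mem_union.mp hb with hb | hb
        · exact hIpair a ha b hb hne hm
        · -- a ∈ I, b = y
          rw [mem_singleton] at hb
          rw [hb] at hm hne
          have hax := hdisj a ha
          simp only [Ivl.meets, not_and, not_le] at hax
          obtain ⟨hxl, hyr⟩ := hstrict
          obtain ⟨hm1, hm2⟩ := hm
          have := hax (by linarith)
          linarith
        · -- a = y, b ∈ I
          rw [mem_singleton] at ha
          rw [ha] at hm hne
          have hbx := hdisj b hb
          simp only [Ivl.meets, not_and, not_le] at hbx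
          obtain ⟨hxl, hyr⟩ := hstrict
          obtain ⟨hm1, hm2⟩ := hm
          have := hbx (by linarith)
          linarith
        · rw [mem_singleton] at ha hb; exact hne (ha.trans hb.symm)
    · exact hnc y hyS z hz hstrict
end

section
/- Let S be a finite set of intervals, k ≥ 0 an integer, and I a k-valid independent set of S. Assume that for an interval x ∈ I there exists y ∈ S that contains x (i.e., ℓ(y) ≤ ℓ(x) and r(x) ≤ r(y)) and such that (I \ {x}) ∪ {y} is an independent set of S. Then (I \ {x}) ∪ {y} is a k-maximal independent set of S. -/
open Finset

/-- If `I` is a `k`-valid independent set of `S`, `x ∈ I`, and `y ∈ S` contains `x`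
with `(I \ {x}) ∪ {y}` an independent set of `S`, then `(I \ {x}) ∪ {y}` is a
`k`-maximal independent set of `S`. -/
theorem stmt8 (S : Finset Ivl) (k : ℕ) (I : Finset Ivl) (hI : IsKValid S k I)
    (x : Ivl) (hx : x ∈ I) (y : Ivl) (hy : y ∈ S)
    (hcont : y.l ≤ x.l ∧ x.r ≤ y.r)
    (hind : IsIndep S (insert y (I.erase x))) :
    IsKMaximal S k (insert y (I.erase x)) := by
  by_cases hxy : y = x
  · subst hxy
    rw [Finset.insert_erase hx]
    exact hI.1
  have hIind := hI.1.1
  have hyI : y ∉ I := by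
    intro hyI
    exact hIind.2 x hx y hyI (Ne.symm hxy)
      ⟨le_trans x.hle hcont.2, le_trans hcont.1 x.hle⟩
  have hxJ : x ∉ insert y (I.erase x) := by
    simp [Ne.symm hxy]
  refine ⟨hind, ?_⟩
  intro t ht A hA B hB hcardA hcardB hindep
  have hBJ : ∀ b ∈ B, b ∈ S ∧ b ∉ insert y (I.erase x) := by
    intro b hb
    have := Finset.mem_sdiff.mp (hB hb)
    exact ⟨this.1, this.2⟩
  have hBnotI : ∀ b ∈ B, b ≠ x → b ∉ I := by
    intro b hb hbx hbI
    exact (hBJ b hb).2 (Finset.mem_insert_of_mem (Finset.mem_erase.mpr ⟨hbx, hbI⟩))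
  have hyB : y ∉ B := fun h => (hBJ y h).2 (Finset.mem_insert_self _ _)
  by_cases hyA : y ∈ A
  · have hxA : x ∉ A := fun h => hxJ (hA h)
    have hAsub : A.erase y ⊆ I := by
      intro z hz
      have hz' := Finset.mem_erase.mp hz
      rcases Finset.mem_insert.mp (hA hz'.2) with h | h
      · exact absurd h hz'.1
      · exact Finset.mem_of_mem_erase h
    have ht1 : 1 ≤ t := by
      rw [← hcardA]; exact Finset.card_pos.mpr ⟨y, hyA⟩
    by_cases hxB : x ∈ B
    · have heq : (I \ A.erase y) ∪ B.erase x = (insert y (I.erase x) \ A) ∪ B := by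
        ext z
        simp only [Finset.mem_union, Finset.mem_sdiff, Finset.mem_erase, Finset.mem_insert]
        by_cases hzx : z = x <;> by_cases hzy : z = y <;> simp_all
      refine hI.1.2 (t-1) (le_trans (Nat.sub_le _ _) ht) (A.erase y) hAsub (B.erase x) ?_ ?_ ?_ ?_
      · intro b hb
        have hb' := Finset.mem_erase.mp hb
        exact Finset.mem_sdiff.mpr ⟨(hBJ b hb'.2).1, hBnotI b hb'.2 hb'.1⟩
      · rw [Finset.card_erase_of_mem hyA, hcardA]
      · rw [Finset.card_erase_of_mem hxB, hcardB]; omega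
      · rw [heq]; exact hindep
    · have hxAe : x ∉ A.erase y := fun h => hxA (Finset.mem_of_mem_erase h)
      have heq : (I \ insert x (A.erase y)) ∪ B = (insert y (I.erase x) \ A) ∪ B := by
        ext z
        simp only [Finset.mem_union, Finset.mem_sdiff, Finset.mem_erase, Finset.mem_insert]
        by_cases hzx : z = x <;> by_cases hzy : z = y <;> simp_all
      refine hI.1.2 t ht (insert x (A.erase y)) ?_ B ?_ ?_ ?_ ?_
      · intro z hz
        rcases Finset.mem_insert.mp hz with h | h
        · exact h ▸ hx
        · exact hAsub h
      · intro b hb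
        exact Finset.mem_sdiff.mpr ⟨(hBJ b hb).1, hBnotI b hb (fun h => hxB (h ▸ hb))⟩
      · rw [Finset.card_insert_of_notMem hxAe, Finset.card_erase_of_mem hyA, hcardA]; omega
      · exact hcardB
      · rw [heq]; exact hindep
  · -- y ∉ A
    have hAsub : A ⊆ I := by
      intro z hz
      rcases Finset.mem_insert.mp (hA hz) with h | h
      · exact absurd (h ▸ hz) hyA
      · exact Finset.mem_of_mem_erase h
    by_cases hxB : x ∈ B
    · -- contradiction: y and x both in (J\A)∪B and they meet
      exact hindep.2 y (Finset.mem_union_left _ (Finset.mem_sdiff.mpr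
            ⟨Finset.mem_insert_self _ _, hyA⟩))
          x (Finset.mem_union_right _ hxB) hxy
          ⟨le_trans hcont.1 x.hle, le_trans x.hle hcont.2⟩
    · refine hI.1.2 t ht A hAsub B ?_ hcardA hcardB ?_
      · intro b hb
        exact Finset.mem_sdiff.mpr ⟨(hBJ b hb).1, hBnotI b hb (fun h => hxB (h ▸ hb))⟩
      · -- prove IsIndep S ((I \ A) ∪ B)
        have hmemJ : ∀ z ∈ (I \ A) ∪ B, z ≠ x →
            z ∈ (insert y (I.erase x) \ A) ∪ B := by
          intro z hz hzx
          rcases Finset.mem_union.mp hz with h | h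
          · have h' := Finset.mem_sdiff.mp h
            exact Finset.mem_union_left _ (Finset.mem_sdiff.mpr
              ⟨Finset.mem_insert_of_mem (Finset.mem_erase.mpr ⟨hzx, h'.1⟩), h'.2⟩)
          · exact Finset.mem_union_right _ h
        have hyJ : y ∈ (insert y (I.erase x) \ A) ∪ B :=
          Finset.mem_union_left _ (Finset.mem_sdiff.mpr ⟨Finset.mem_insert_self _ _, hyA⟩)
        constructor
        · intro z hz
          rcases Finset.mem_union.mp hz with h | h
          · exact hIind.1 (Finset.mem_sdiff.mp h).1
          · exact (hBJ z h).1
        · intro u hu v hv huv hmeet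
          by_cases hux : u = x
          · rw [hux] at hmeet huv
            have hvx : v ≠ x := fun h => huv h.symm
            have hvy : v ≠ y := by
              intro h; subst h
              rcases Finset.mem_union.mp hv with h | h
              · exact hyI (Finset.mem_sdiff.mp h).1
              · exact hyB h
            exact hindep.2 v (hmemJ v hv hvx) y hyJ hvy
              ⟨le_trans hmeet.2 hcont.2, le_trans hcont.1 hmeet.1⟩
          · by_cases hvx : v = x
            · rw [hvx] at hmeet huv
              have huy : u ≠ y := by
                intro h; subst h
                rcases Finset.mem_union.mp hu with h | h
                · exact hyI (Finset.mem_sdiff.mp h).1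
                · exact hyB h
              exact hindep.2 u (hmemJ u hu hux) y hyJ huy
                ⟨le_trans hmeet.1 hcont.2, le_trans hcont.1 hmeet.2⟩
            · exact hindep.2 u (hmemJ u hu hux) v (hmemJ v hv hvx) huv hmeet
end

section
/- Let S be a finite set of intervals, k ≥ 0 an integer, and I a k-valid independent set of S. Let y ∈ S \ I and let y' be an interval that strictly contains y (y ⊊ y' as subsets of ℝ, i.e., ℓ(y') ≤ ℓ(y), r(y) ≤ r(y'), and y' ≠ y). Then I is a k-valid independent set of (S \ {y}) ∪ {y'}. -/
open Finset

/-- If `I` is a `k`-valid independent set of `S`, `y ∈ S \ I`, and `y'` strictly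
contains `y` (as subsets of `ℝ`), then `I` is a `k`-valid independent set of
`(S \ {y}) ∪ {y'}`. -/
theorem stmt9 (S : Finset Ivl) (k : ℕ) (I : Finset Ivl) (hI : IsKValid S k I)
    (y : Ivl) (hy : y ∈ S \ I) (y' : Ivl)
    (h1 : y'.l ≤ y.l) (h2 : y.r ≤ y'.r) (h3 : y' ≠ y) :
    IsKValid (insert y' (S.erase y)) k I := by
  obtain ⟨⟨⟨hIS, hInd⟩, hmax⟩, hnc⟩ := hI
  have hyS : y ∈ S := (mem_sdiff.mp hy).1
  have hyI : y ∉ I := (mem_sdiff.mp hy).2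
  have hmono : ∀ x : Ivl, Ivl.meets x y → Ivl.meets x y' := by
    intro x ⟨u, v⟩
    exact ⟨le_trans u h2, le_trans h1 v⟩
  have hIS' : I ⊆ insert y' (S.erase y) := by
    intro x hx
    exact mem_insert_of_mem (mem_erase.mpr ⟨fun h => hyI (h ▸ hx), hIS hx⟩)
  have hyS' : y ∉ insert y' (S.erase y) := by
    intro h
    rcases mem_insert.mp h with h | h
    exacts [h3 h.symm, (mem_erase.mp h).1 rfl]
  refine ⟨⟨⟨hIS', hInd⟩, ?_⟩, ?_⟩
  · intro t ht A hA B hB hAc hBc hind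
    have hBsub : ∀ b ∈ B, b ≠ y' → b ∈ S \ I := by
      intro b hb hne
      have := mem_sdiff.mp (hB hb)
      rcases mem_insert.mp this.1 with h | h
      · exact absurd h hne
      · exact mem_sdiff.mpr ⟨(mem_erase.mp h).2, this.2⟩
    by_cases hy'B : y' ∈ B
    · have hy'I : y' ∉ I := (mem_sdiff.mp (hB hy'B)).2
      set B' := insert y (B.erase y') with hB'
      have hyB : y ∉ B := fun h => hyS' (mem_sdiff.mp (hB h)).1
      have hB'c : B'.card = t + 1 := by
        rw [card_insert_of_notMem (fun h => hyB (mem_of_mem_erase h)),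
          card_erase_of_mem hy'B, hBc]
        omega
      have hB'S : B' ⊆ S \ I := by
        intro b hb
        rcases mem_insert.mp hb with h | h
        · exact h ▸ hy
        · exact hBsub b (mem_of_mem_erase h) (mem_erase.mp h).1
      refine hmax t ht A hA B' hB'S hAc hB'c ?_
      have hT : ∀ x ∈ (I \ A) ∪ B', x ≠ y → x ∈ (I \ A) ∪ B ∧ x ≠ y' := by
        intro x hx hne
        rcases mem_union.mp hx with h | h
        · exact ⟨mem_union_left _ h, fun h' => hy'I (h' ▸ (mem_sdiff.mp h).1)⟩
        · rcases mem_insert.mp h with h | h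
          · exact absurd h hne
          · exact ⟨mem_union_right _ (mem_of_mem_erase h), (mem_erase.mp h).1⟩
      constructor
      · intro x hx
        rcases mem_union.mp hx with h | h
        · exact hIS (mem_sdiff.mp h).1
        · exact (mem_sdiff.mp (hB'S h)).1
      · intro x1 hx1 x2 hx2 hne
        by_cases e1 : x1 = y
        · by_cases e2 : x2 = y
          · exact absurd (e1.trans e2.symm) hne
          · obtain ⟨h2m, h2ne⟩ := hT x2 hx2 e2
            intro hm
            exact hind.2 x2 h2m y' (mem_union_right _ hy'B) h2ne
              (hmono x2 ⟨(e1 ▸ hm).2, (e1 ▸ hm).1⟩)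
        · by_cases e2 : x2 = y
          · obtain ⟨h1m, h1ne⟩ := hT x1 hx1 e1
            intro hm
            exact hind.2 x1 h1m y' (mem_union_right _ hy'B) h1ne (hmono x1 (e2 ▸ hm))
          · obtain ⟨h1m, _⟩ := hT x1 hx1 e1
            obtain ⟨h2m, _⟩ := hT x2 hx2 e2
            exact hind.2 x1 h1m x2 h2m hne
    · have hBS : B ⊆ S \ I := fun b hb => hBsub b hb (fun h => hy'B (h ▸ hb))
      refine hmax t ht A hA B hBS hAc hBc ?_
      refine ⟨?_, hind.2⟩
      intro x hx
      rcases mem_union.mp hx with h | h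
      · exact hIS (mem_sdiff.mp h).1
      · exact (mem_sdiff.mp (hBS h)).1
  · intro z hz x hx hsi
    rcases mem_insert.mp (mem_sdiff.mp hz).1 with h | h
    · subst h
      exact hnc y hy x hx ⟨lt_of_lt_of_le hsi.1 h1, lt_of_le_of_lt h2 hsi.2⟩
    · exact hnc z (mem_sdiff.mpr ⟨(mem_erase.mp h).2, (mem_sdiff.mp hz).2⟩) x hx hsi
end

section
/- Let k ≥ 0 be an integer, t ∈ ℝ, and let S_1 and S_2 be finite sets of intervals with ℓ(x) ≤ t for every x ∈ S_1 and ℓ(y) > t for every y ∈ S_2. Let b be an interval with t < ℓ(b), with r(b) < ℓ(y) for every y ∈ S_2, and such that no endpoint of any interval of S_1 ∪ S_2 lies in [ℓ(b), r(b)]. Let I'_1 be a k-valid independent set of S_1 ∪ {b} with b ∈ I'_1, and let I_2 be a k-valid independent set of S_2. Then I'_1 ∪ I_2 is a k-valid independent set of S_1 ∪ S_2 ∪ {b}. -/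
open Finset

/-- Merging two `k`-valid independent sets across a fake tiny interval `b`: if all
intervals of `S₁` have left endpoint `≤ t`, all intervals of `S₂` have left
endpoint `> t`, the interval `b` satisfies `t < ℓ(b)`, lies strictly to the left of
every interval of `S₂`, and contains no endpoint of any interval of `S₁ ∪ S₂`, and
if `I₁'` is a `k`-valid independent set of `S₁ ∪ {b}` containing `b` and `I₂` is a
`k`-valid independent set of `S₂`, then `I₁' ∪ I₂` is a `k`-valid independent set of
`S₁ ∪ S₂ ∪ {b}`. -/
theorem stmt10 (k : ℕ) (t : ℝ) (S1 S2 : Finset Ivl)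
    (hS1 : ∀ x ∈ S1, x.l ≤ t) (hS2 : ∀ y ∈ S2, t < y.l)
    (b : Ivl) (hb1 : t < b.l) (hb2 : ∀ y ∈ S2, b.r < y.l)
    (hb3 : ∀ x ∈ S1 ∪ S2,
      ¬ (b.l ≤ x.l ∧ x.l ≤ b.r) ∧ ¬ (b.l ≤ x.r ∧ x.r ≤ b.r))
    (I1' : Finset Ivl) (hI1 : IsKValid (insert b S1) k I1') (hbI : b ∈ I1')
    (I2 : Finset Ivl) (hI2 : IsKValid S2 k I2) :
    IsKValid (insert b (S1 ∪ S2)) k (I1' ∪ I2) := by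
  classical
  have hbS2 : b ∉ S2 := fun h => absurd b.hle (not_le.mpr (hb2 b h))
  have hdisjS : ∀ x, x ∈ S1 → x ∈ S2 → False := fun x h1 h2 =>
    absurd (hS1 x h1) (not_le.mpr (hS2 x h2))
  obtain ⟨⟨⟨hI1sub, hI1ind⟩, hI1max⟩, hI1nc⟩ := hI1
  obtain ⟨⟨⟨hI2sub, hI2ind⟩, hI2max⟩, hI2nc⟩ := hI2
  have hdisjI : ∀ x, x ∈ I1' → x ∈ I2 → False := by
    intro x h1 h2
    rcases Finset.mem_insert.mp (hI1sub h1) with rfl | h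
    · exact hbS2 (hI2sub h2)
    · exact hdisjS x h (hI2sub h2)
  have hI1r : ∀ x ∈ I1', x ≠ b → x.r < b.l := by
    intro x hx hne
    have hxS1 : x ∈ S1 := (Finset.mem_insert.mp (hI1sub hx)).resolve_left hne
    have hm := hI1ind x hx b hbI hne
    by_contra h
    push_neg at h
    exact hm ⟨le_trans (le_trans (hS1 x hxS1) (le_of_lt hb1)) b.hle, h⟩
  have hI2l : ∀ y ∈ I2, b.r < y.l := fun y hy => hb2 y (hI2sub hy)
  have hsep : ∀ x ∈ I1', ∀ y ∈ I2, x.r < y.l := by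
    intro x hx y hy
    by_cases hxb : x = b
    · subst hxb; exact hI2l y hy
    · exact lt_trans (lt_of_lt_of_le (hI1r x hx hxb) b.hle) (hI2l y hy)
  have hIsub : I1' ∪ I2 ⊆ insert b (S1 ∪ S2) := by
    intro x hx
    rcases Finset.mem_union.mp hx with h | h
    · rcases Finset.mem_insert.mp (hI1sub h) with rfl | h'
      · exact Finset.mem_insert_self _ _
      · exact Finset.mem_insert_of_mem (Finset.mem_union_left _ h')
    · exact Finset.mem_insert_of_mem (Finset.mem_union_right _ (hI2sub h))
  have hindI : IsIndep (insert b (S1 ∪ S2)) (I1' ∪ I2) := by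
    refine ⟨hIsub, ?_⟩
    intro x hx y hy hne
    rcases Finset.mem_union.mp hx with hx1 | hx2 <;>
      rcases Finset.mem_union.mp hy with hy1 | hy2
    · exact hI1ind x hx1 y hy1 hne
    · rintro ⟨_, h⟩; exact absurd h (not_le.mpr (hsep x hx1 y hy2))
    · rintro ⟨h, _⟩; exact absurd h (not_le.mpr (hsep y hy1 x hx2))
    · exact hI2ind x hx2 y hy2 hne
  constructor
  · refine ⟨hindI, ?_⟩
    intro τ hτ A hA B hB hcA hcB hind
    have hbB : b ∉ B := fun h =>
      (Finset.mem_sdiff.mp (hB h)).2 (Finset.mem_union_left _ hbI)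
    have hBsub : B ⊆ S1 ∪ S2 := by
      intro x hx
      rcases Finset.mem_insert.mp (Finset.mem_sdiff.mp (hB hx)).1 with rfl | h
      · exact absurd hx hbB
      · exact h
    have hdisA : Disjoint (A ∩ I1') (A ∩ I2) := by
      rw [Finset.disjoint_left]
      intro x h1 h2
      exact hdisjI x (Finset.mem_inter.mp h1).2 (Finset.mem_inter.mp h2).2
    have hdisB : Disjoint (B ∩ S1) (B ∩ S2) := by
      rw [Finset.disjoint_left]
      intro x h1 h2
      exact hdisjS x (Finset.mem_inter.mp h1).2 (Finset.mem_inter.mp h2).2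
    have hAeq : (A ∩ I1') ∪ (A ∩ I2) = A := by
      rw [← Finset.inter_union_distrib_left]
      exact Finset.inter_eq_left.mpr hA
    have hBeq : (B ∩ S1) ∪ (B ∩ S2) = B := by
      rw [← Finset.inter_union_distrib_left]
      exact Finset.inter_eq_left.mpr hBsub
    have hcardA : (A ∩ I1').card + (A ∩ I2).card = τ := by
      rw [← Finset.card_union_of_disjoint hdisA, hAeq, hcA]
    have hcardB : (B ∩ S1).card + (B ∩ S2).card = τ + 1 := by
      rw [← Finset.card_union_of_disjoint hdisB, hBeq, hcB]
    have hor : (A ∩ I1').card + 1 ≤ (B ∩ S1).card ∨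
        (A ∩ I2).card + 1 ≤ (B ∩ S2).card := by omega
    rcases hor with h1 | h2
    · obtain ⟨B1', hB1'sub, hB1'card⟩ := Finset.exists_subset_card_eq h1
      refine hI1max (A ∩ I1').card (by omega) (A ∩ I1') Finset.inter_subset_right
        B1' ?_ rfl hB1'card ?_
      · intro x hx
        have hx1 := hB1'sub hx
        refine Finset.mem_sdiff.mpr ⟨Finset.mem_insert_of_mem (Finset.mem_inter.mp hx1).2,
          fun h => ?_⟩
        exact (Finset.mem_sdiff.mp (hB (Finset.mem_inter.mp hx1).1)).2
          (Finset.mem_union_left _ h)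
      · have hsub : (I1' \ (A ∩ I1')) ∪ B1' ⊆ ((I1' ∪ I2) \ A) ∪ B := by
          intro x hx
          rcases Finset.mem_union.mp hx with h | h
          · obtain ⟨hxI, hxA⟩ := Finset.mem_sdiff.mp h
            exact Finset.mem_union_left _ (Finset.mem_sdiff.mpr
              ⟨Finset.mem_union_left _ hxI,
               fun ha => hxA (Finset.mem_inter.mpr ⟨ha, hxI⟩)⟩)
          · exact Finset.mem_union_right _ (Finset.mem_inter.mp (hB1'sub h)).1
        refine ⟨?_, fun x hx y hy hne => hind.2 x (hsub hx) y (hsub hy) hne⟩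
        intro x hx
        rcases Finset.mem_union.mp hx with h | h
        · exact hI1sub (Finset.mem_sdiff.mp h).1
        · exact Finset.mem_insert_of_mem (Finset.mem_inter.mp (hB1'sub h)).2
    · obtain ⟨B2', hB2'sub, hB2'card⟩ := Finset.exists_subset_card_eq h2
      refine hI2max (A ∩ I2).card (by omega) (A ∩ I2) Finset.inter_subset_right
        B2' ?_ rfl hB2'card ?_
      · intro x hx
        have hx1 := hB2'sub hx
        refine Finset.mem_sdiff.mpr ⟨(Finset.mem_inter.mp hx1).2, fun h => ?_⟩
        exact (Finset.mem_sdiff.mp (hB (Finset.mem_inter.mp hx1).1)).2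
          (Finset.mem_union_right _ h)
      · have hsub : (I2 \ (A ∩ I2)) ∪ B2' ⊆ ((I1' ∪ I2) \ A) ∪ B := by
          intro x hx
          rcases Finset.mem_union.mp hx with h | h
          · obtain ⟨hxI, hxA⟩ := Finset.mem_sdiff.mp h
            exact Finset.mem_union_left _ (Finset.mem_sdiff.mpr
              ⟨Finset.mem_union_right _ hxI,
               fun ha => hxA (Finset.mem_inter.mpr ⟨ha, hxI⟩)⟩)
          · exact Finset.mem_union_right _ (Finset.mem_inter.mp (hB2'sub h)).1
        refine ⟨?_, fun x hx y hy hne => hind.2 x (hsub hx) y (hsub hy) hne⟩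
        intro x hx
        rcases Finset.mem_union.mp hx with h | h
        · exact hI2sub (Finset.mem_sdiff.mp h).1
        · exact (Finset.mem_inter.mp (hB2'sub h)).2
  · intro y hy x hx hcont
    obtain ⟨hyS, hyI⟩ := Finset.mem_sdiff.mp hy
    obtain ⟨hcl, hcr⟩ := hcont
    rcases Finset.mem_union.mp hx with hx1 | hx2
    · rcases Finset.mem_insert.mp hyS with rfl | hyS'
      · exact hyI (Finset.mem_union_left _ hbI)
      rcases Finset.mem_union.mp hyS' with hy1 | hy2
      · exact hI1nc y (Finset.mem_sdiff.mpr ⟨Finset.mem_insert_of_mem hy1,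
          fun h => hyI (Finset.mem_union_left _ h)⟩) x hx1 ⟨hcl, hcr⟩
      · have h1 := hb2 y hy2
        by_cases hxb : x = b
        · rw [hxb] at hcr; have := y.hle; linarith
        · have h2 := hI1r x hx1 hxb
          have := y.hle
          have := b.hle
          linarith
    · have hxl := hI2l x hx2
      rcases Finset.mem_insert.mp hyS with rfl | hyS'
      · have := y.hle; linarith
      rcases Finset.mem_union.mp hyS' with hy1 | hy2
      · have hyl : t < y.l := by
          have := b.hle; linarith
        exact absurd (hS1 y hy1) (not_le.mpr hyl)
      · exact hI2nc y (Finset.mem_sdiff.mpr ⟨hy2,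
          fun h => hyI (Finset.mem_union_right _ h)⟩) x hx2 ⟨hcl, hcr⟩
end

section
/- Let k > 0, and let L and U be independent random variables with L uniformly distributed on [k, 2k] and U uniformly distributed on [0, 1]. Then the probability of the event { U · L / 2 + k ≤ L } is at least 1/2. (Equivalently, (1/k) · ∫_{k}^{2k} 2(ℓ − k)/ℓ dℓ = 2 − 2 ln 2 ≥ 1/2.) -/
/-!
By independence, the joint law of `(L, U)` is the product of the two uniform laws. For fixed
`L = ℓ ∈ [k, 2k]` the event reads `U ≤ 2 - 2k/ℓ`, a threshold in `[0, 1]`, so by Fubini its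
probability is `(1/k) ∫_k^{2k} (2 - 2k/ℓ) dℓ = 2 (1 - log 2)`, which exceeds `1/2` since
`log 2 < 3/4`.
-/

open MeasureTheory ProbabilityTheory Set Real
open scoped ENNReal

lemma volume_restrict_Icc_zero_one_setOf_mul_half_add_le {k l : ℝ} (hl : 0 < l)
    (hlk : l ≤ 2 * k) :
    volume.restrict (Icc 0 1) {u : ℝ | u * l / 2 + k ≤ l} = ENNReal.ofReal (2 - 2 * k / l) := by
  have hset : {u : ℝ | u * l / 2 + k ≤ l} ∩ Icc 0 1 = Icc 0 (2 - 2 * k / l) := by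
    have hle : 2 - 2 * k / l ≤ 1 := by
      rw [sub_le_comm, le_div_iff₀ hl]; linarith
    have hiff (u : ℝ) : u * l / 2 + k ≤ l ↔ u ≤ 2 - 2 * k / l := by
      rw [show 2 - 2 * k / l = 2 * (l - k) / l by field_simp, le_div_iff₀ hl]
      constructor <;> intro h <;> linarith
    ext u
    simp only [mem_inter_iff, mem_ofPred_eq, mem_Icc, hiff]
    exact ⟨fun ⟨hu, hu0, _⟩ => ⟨hu0, hu⟩,
      fun ⟨hu0, hu⟩ => ⟨hu, hu0, hu.trans hle⟩⟩
  rw [Measure.restrict_apply (measurableSet_le (by fun_prop) (by fun_prop)), hset,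
    Real.volume_Icc, sub_zero]

lemma integral_two_sub_div {k : ℝ} (hk : 0 < k) :
    ∫ l in k..2 * k, (2 - 2 * k / l) = 2 * k * (1 - log 2) := by
  have hinv : IntervalIntegrable (fun l : ℝ => l⁻¹) volume k (2 * k) :=
    intervalIntegral.intervalIntegrable_inv
      (fun l hl => (lt_of_lt_of_le (lt_min hk (by linarith)) hl.1).ne') continuousOn_id
  simp_rw [div_eq_mul_inv]
  rw [intervalIntegral.integral_sub intervalIntegrable_const (hinv.const_mul _),
    intervalIntegral.integral_const_mul, integral_inv_of_pos hk (by positivity),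
    intervalIntegral.integral_const, mul_div_assoc, div_self hk.ne', mul_one, smul_eq_mul]
  ring

lemma lintegral_Icc_ofReal_two_sub_div {k : ℝ} (hk : 0 < k) :
    ∫⁻ l in Icc k (2 * k), ENNReal.ofReal (2 - 2 * k / l) =
      ENNReal.ofReal (2 * k * (1 - log 2)) := by
  have hcont : ContinuousOn (fun l : ℝ => 2 - 2 * k / l) (Icc k (2 * k)) :=
    continuousOn_const.sub
      (continuousOn_const.div continuousOn_id fun l hl => (hk.trans_le hl.1).ne')
  rw [← integral_two_sub_div hk, intervalIntegral.integral_of_le (by linarith),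
    ← integral_Icc_eq_integral_Ioc, ofReal_integral_eq_lintegral_ofReal hcont.integrableOn_Icc]
  filter_upwards [ae_restrict_mem measurableSet_Icc] with l hl
  rw [Pi.zero_apply, sub_nonneg, div_le_iff₀ (hk.trans_le hl.1)]
  linarith [hl.1]

lemma uniform_prod_uniform_setOf_mul_half_add_le {k : ℝ} (hk : 0 < k) :
    ((ENNReal.ofReal (1 / k) • volume.restrict (Icc k (2 * k))).prod
        (volume.restrict (Icc (0 : ℝ) 1))) {p : ℝ × ℝ | p.2 * p.1 / 2 + k ≤ p.1} =
      ENNReal.ofReal (2 * (1 - log 2)) := by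
  rw [Measure.prod_smul_left, Measure.smul_apply,
    Measure.prod_apply (measurableSet_le (by fun_prop) (by fun_prop)), smul_eq_mul]
  simp only [preimage_ofPred_eq]
  rw [setLIntegral_congr_fun measurableSet_Icc (fun l hl =>
      volume_restrict_Icc_zero_one_setOf_mul_half_add_le (hk.trans_le hl.1) hl.2),
    lintegral_Icc_ofReal_two_sub_div hk, ← ENNReal.ofReal_mul (by positivity)]
  congr 1
  field_simp

/-- If `L` and `U` are independent random variables, `L` uniformly distributed on
`[k, 2k]` (for `k > 0`) and `U` uniformly distributed on `[0, 1]`, then the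
probability of the event `{U · L / 2 + k ≤ L}` is at least `1/2`. -/
theorem stmt14 (k : ℝ) (hk : 0 < k)
    {Ω : Type*} [MeasurableSpace Ω] (μ : Measure Ω) [IsProbabilityMeasure μ]
    (L U : Ω → ℝ)
    (hLlaw : μ.map L = ENNReal.ofReal (1 / k) • volume.restrict (Set.Icc k (2 * k)))
    (hUlaw : μ.map U = volume.restrict (Set.Icc 0 1))
    (hindep : IndepFun L U μ) :
    (1 / 2 : ℝ≥0∞) ≤ μ {ω | U ω * L ω / 2 + k ≤ L ω} := by
  have hL : AEMeasurable L μ := .of_map_ne_zero <| by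
    simp [hLlaw, Measure.restrict_eq_zero, hk]
  have hU : AEMeasurable U μ := .of_map_ne_zero <| by
    simp [hUlaw, Measure.restrict_eq_zero]
  calc (1 / 2 : ℝ≥0∞) ≤ ENNReal.ofReal (2 * (1 - log 2)) := by
        rw [← ENNReal.ofReal_ofNat 2, ← ENNReal.ofReal_one,
          ← ENNReal.ofReal_div_of_pos two_pos]
        exact ENNReal.ofReal_le_ofReal (by linarith [log_two_lt_d9])
    _ = μ.map (fun ω => (L ω, U ω)) {p : ℝ × ℝ | p.2 * p.1 / 2 + k ≤ p.1} := by
        rw [hindep.map_prod_eq_prod_map_map hL hU, hLlaw, hUlaw,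
          uniform_prod_uniform_setOf_mul_half_add_le hk]
    _ = μ {ω | U ω * L ω / 2 + k ≤ L ω} :=
        Measure.map_apply_of_aemeasurable (hL.prodMk hU)
          (measurableSet_le (by fun_prop) (by fun_prop))
end
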